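/- arXiv:2310.11080 — 3 statements merged into one kernel-verified Lean document; each statement's English description precedes it below -/
import Mathlib

section
/- Let the state and channel of the action-dependent ISAC model be memoryless, P_{S_e^n S^n S_d^n|A^n} = ∏_{i=1}^n P_{S_{e,i} S_i S_{d,i}|A_i} and P_{Y^n Z^n|X^n S^n} = ∏_{i=1}^n P_{Y_i Z_i|X_i S_i}, and let the distortion be additive and bounded: (1/n) d_n(s^n, ŝ^n) = (1/n) Σ_{i=1}^n d(s_i, ŝ_i) with 0 ≤ d ≤ D_max < ∞. Let Ŝ = {Ŝ^n} be the reproduction process induced by an arbitrary admissible input process, and let Ŝ* = {Ŝ^{n*}} be the reproduction process induced by the memoryless input process (A*,U*,X*) (with P_{A^{n*}} = ∏_i P_{A_i*}, P_{U^{n*}|A^{n*} S_e^n} = ∏_i P_{U_i*|A_i* S_{e,i}}, P_{X^{n*}|U^{n*} S_e^n} = ∏_i P_{X_i*|U_i* S_{e,i}}) whose per-coordinate joint laws satisfy P_{S_i^{(n)} Ŝ_i^{(n)*}} = P_{S_i^{(n)} Ŝ_i^{(n)}} for every i and n, so that the pairs (S_i^{(n)}, Ŝ_i^{(n)*}) are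 independent across i. Then the maximal distortion satisfies D̄(S, Ŝ*) ≤ D̄(S, Ŝ), and the average distortion satisfies D(S, Ŝ*) = D(S, Ŝ); in fact D̄(S, Ŝ*) = limsup_n (1/n) Σ_{i=1}^n E[d(S_i^{(n)}, Ŝ_i^{(n)})] = D(S, Ŝ). -/
open Filter MeasureTheory

noncomputable section

namespace ISAC

/-- `n`-length sequences over the alphabet `α`. -/
abbrev Vec (α : Type) (n : ℕ) : Type := Fin n → α

/-- Probability of a set under a `PMF`. -/
def prSet {α : Type} (p : PMF α) (s : Set α) : ENNReal :=
  ∑' a, Set.indicator s (fun x => p x) a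

/-- Expectation of a real-valued function under a `PMF`. -/
def expect {α : Type} (p : PMF α) (f : α → ℝ) : ℝ :=
  ∑' a, (p a).toReal * f a

/-- limsup in probability of a sequence `Z n` of real random variables on `(Ω n, p n)`:
`inf {a | lim_n Pr[Z n > a] = 0}`. -/
def pLimsup {Ω : ℕ → Type} (p : ∀ n, PMF (Ω n)) (Z : ∀ n, Ω n → ℝ) : ℝ :=
  sInf {a : ℝ | Tendsto (fun n => prSet (p n) {ω | a < Z n ω}) atTop (nhds 0)}

/-- liminf in probability: `sup {b | lim_n Pr[Z n < b] = 0}`. -/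
def pLiminf {Ω : ℕ → Type} (p : ∀ n, PMF (Ω n)) (Z : ∀ n, Ω n → ℝ) : ℝ :=
  sSup {b : ℝ | Tendsto (fun n => prSet (p n) {ω | Z n ω < b}) atTop (nhds 0)}

/-- Information density `log (P(x,y) / (P(x) P(y)))`. -/
def infoDensity {α β : Type} (p : PMF (α × β)) (v : α × β) : ℝ :=
  Real.log ((p v).toReal /
    (((p.map Prod.fst) v.1).toReal * ((p.map Prod.snd) v.2).toReal))

/-- Conditional information density `log (P(x,y,c) P(c) / (P(x,c) P(y,c)))`,
conditioning on the third coordinate. -/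
def condInfoDensity {α β γ : Type} (p : PMF (α × β × γ)) (v : α × β × γ) : ℝ :=
  Real.log (((p v).toReal * ((p.map fun t => t.2.2) v.2.2).toReal) /
    (((p.map fun t => (t.1, t.2.2)) (v.1, v.2.2)).toReal *
      ((p.map fun t => (t.2.1, t.2.2)) (v.2.1, v.2.2)).toReal))

/-- Spectral inf-mutual information rate. -/
def specInf {α β : ℕ → Type} (p : ∀ n, PMF (α n × β n)) : ℝ :=
  pLiminf p fun n v => (n : ℝ)⁻¹ * infoDensity (p n) v

/-- Spectral sup-mutual information rate. -/
def specSup {α β : ℕ → Type} (p : ∀ n, PMF (α n × β n)) : ℝ :=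
  pLimsup p fun n v => (n : ℝ)⁻¹ * infoDensity (p n) v

/-- Spectral conditional inf-mutual information rate. -/
def specCondInf {α β γ : ℕ → Type} (p : ∀ n, PMF (α n × β n × γ n)) : ℝ :=
  pLiminf p fun n v => (n : ℝ)⁻¹ * condInfoDensity (p n) v

/-- Spectral conditional sup-mutual information rate. -/
def specCondSup {α β γ : ℕ → Type} (p : ∀ n, PMF (α n × β n × γ n)) : ℝ :=
  pLimsup p fun n v => (n : ℝ)⁻¹ * condInfoDensity (p n) v

section General

variable {𝒜 𝒳 𝒮e 𝒮 𝒮d 𝒴 𝒵 Sh : Type}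

/-- An `(n, M_n, A_n)` code for the action-dependent ISAC model: a message set `Fin M`,
an action encoder, a message encoder (with encoder-side CSI), a decoder (with decoder-side
CSI) and a state estimator. -/
structure Code (𝒜 𝒳 𝒮e 𝒮d 𝒴 𝒵 Sh : Type) (n : ℕ) where
  M : ℕ
  hM : 0 < M
  actEnc : Fin M → Vec 𝒜 n
  enc : Fin M → Vec 𝒮e n → Vec 𝒳 n
  dec : Vec 𝒴 n × Vec 𝒮d n → Fin M
  est : Fin M → Vec 𝒮e n → Vec 𝒵 n → Vec Sh n

variable (q : ∀ n, Vec 𝒜 n → PMF (Vec 𝒮e n × Vec 𝒮 n × Vec 𝒮d n))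
  (W : ∀ n, Vec 𝒳 n × Vec 𝒮 n → PMF (Vec 𝒴 n × Vec 𝒵 n))
  (d : ∀ n, Vec 𝒮 n → Vec Sh n → ℝ)

/-- Joint law of `(M, S_e^n, S^n, S_d^n, Y^n, Z^n)` induced by a code, a uniform message,
the action-dependent state distribution `q` and the channel `W`. -/
def codeJoint {n : ℕ} (c : Code 𝒜 𝒳 𝒮e 𝒮d 𝒴 𝒵 Sh n) :
    PMF (Fin c.M × Vec 𝒮e n × Vec 𝒮 n × Vec 𝒮d n × Vec 𝒴 n × Vec 𝒵 n) :=
  haveI : Nonempty (Fin c.M) := ⟨⟨0, c.hM⟩⟩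
  (PMF.uniformOfFintype (Fin c.M)).bind fun m =>
    (q n (c.actEnc m)).bind fun t =>
      (W n (c.enc m t.1, t.2.1)).map fun yz => (m, t.1, t.2.1, t.2.2, yz.1, yz.2)

/-- Average decoding error probability of a code. -/
def Pe {n : ℕ} (c : Code 𝒜 𝒳 𝒮e 𝒮d 𝒴 𝒵 Sh n) : ℝ :=
  (prSet (codeJoint q W c) {t | c.dec (t.2.2.2.2.1, t.2.2.2.1) ≠ t.1}).toReal

/-- The (unnormalized) distortion `d_n(S^n, Sh^n)` incurred by the estimator of a code. -/
def codeDistRV {n : ℕ} (c : Code 𝒜 𝒳 𝒮e 𝒮d 𝒴 𝒵 Sh n)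
    (t : Fin c.M × Vec 𝒮e n × Vec 𝒮 n × Vec 𝒮d n × Vec 𝒴 n × Vec 𝒵 n) : ℝ :=
  d n t.2.2.1 (c.est t.1 t.2.1 t.2.2.2.2.2)

/-- `(R, D)` is average-achievable. -/
def aAchievable (R D : ℝ) : Prop :=
  ∀ ε > (0 : ℝ), ∃ c : ∀ n, Code 𝒜 𝒳 𝒮e 𝒮d 𝒴 𝒵 Sh n,
    R ≤ liminf (fun n : ℕ => (n : ℝ)⁻¹ * Real.log ((c n).M : ℝ)) atTop ∧
    limsup (fun n : ℕ => Pe q W (c n)) atTop ≤ ε ∧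
    limsup (fun n : ℕ =>
      (n : ℝ)⁻¹ * expect (codeJoint q W (c n)) (codeDistRV d (c n))) atTop ≤ D

/-- `(R, D)` is maximal-achievable. -/
def mAchievable (R D : ℝ) : Prop :=
  ∀ ε > (0 : ℝ), ∃ c : ∀ n, Code 𝒜 𝒳 𝒮e 𝒮d 𝒴 𝒵 Sh n,
    R ≤ liminf (fun n : ℕ => (n : ℝ)⁻¹ * Real.log ((c n).M : ℝ)) atTop ∧
    limsup (fun n : ℕ => Pe q W (c n)) atTop ≤ ε ∧
    pLimsup (fun n => codeJoint q W (c n))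
      (fun n t => (n : ℝ)⁻¹ * codeDistRV d (c n) t) ≤ D

/-- Capacity–distortion function under the average distortion constraint. -/
def Ca (D : ℝ) : ℝ := sSup {R | aAchievable q W d R D}

/-- Capacity–distortion function under the maximal distortion constraint. -/
def Cm (D : ℝ) : ℝ := sSup {R | mAchievable q W d R D}

/-- Joint law of `(A^n, U^n, S_e^n, S^n, S_d^n, X^n, Y^n, Z^n)` for a random process with
joint distribution `P_{A^n} P_{S_e^n S^n S_d^n|A^n} P_{U^n|A^n S_e^n} P_{X^n|U^n S_e^n}
P_{Y^n Z^n|X^n S^n}`. -/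
def procJoint {𝒰 : Type} (PA : ∀ n, PMF (Vec 𝒜 n))
    (PU : ∀ n, Vec 𝒜 n × Vec 𝒮e n → PMF (Vec 𝒰 n))
    (PX : ∀ n, Vec 𝒰 n × Vec 𝒮e n → PMF (Vec 𝒳 n)) (n : ℕ) :
    PMF (Vec 𝒜 n × Vec 𝒰 n × Vec 𝒮e n × Vec 𝒮 n × Vec 𝒮d n ×
      Vec 𝒳 n × Vec 𝒴 n × Vec 𝒵 n) :=
  (PA n).bind fun a => (q n a).bind fun t => (PU n (a, t.1)).bind fun u =>
    (PX n (u, t.1)).bind fun x =>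
      (W n (x, t.2.1)).map fun yz => (a, u, t.1, t.2.1, t.2.2, x, yz.1, yz.2)

/-- The distortion `d_n(S^n, g_n(X^n, A^n, S_e^n, Z^n))` as a function on the process tuple. -/
def procDistRV {𝒰 : Type}
    (g : ∀ n, Vec 𝒳 n → Vec 𝒜 n → Vec 𝒮e n → Vec 𝒵 n → Vec Sh n) (n : ℕ)
    (t : Vec 𝒜 n × Vec 𝒰 n × Vec 𝒮e n × Vec 𝒮 n × Vec 𝒮d n ×
      Vec 𝒳 n × Vec 𝒴 n × Vec 𝒵 n) : ℝ :=
  d n t.2.2.2.1 (g n t.2.2.2.2.2.1 t.1 t.2.2.1 t.2.2.2.2.2.2.2)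

end General

/-- `((A,U),(Y,S_d))` from the process tuple `(a,u,se,s,sd,x,y,z)`. -/
def toAUYSd {𝒜 𝒰 𝒮e 𝒮 𝒮d 𝒳 𝒴 𝒵 : Type} (t : 𝒜 × 𝒰 × 𝒮e × 𝒮 × 𝒮d × 𝒳 × 𝒴 × 𝒵) :
    (𝒜 × 𝒰) × (𝒴 × 𝒮d) :=
  ((t.1, t.2.1), (t.2.2.2.2.2.2.1, t.2.2.2.2.1))

/-- `(U,(Y,S_d))` from the process tuple. -/
def toUYSd {𝒜 𝒰 𝒮e 𝒮 𝒮d 𝒳 𝒴 𝒵 : Type} (t : 𝒜 × 𝒰 × 𝒮e × 𝒮 × 𝒮d × 𝒳 × 𝒴 × 𝒵) :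
    𝒰 × (𝒴 × 𝒮d) :=
  (t.2.1, (t.2.2.2.2.2.2.1, t.2.2.2.2.1))

/-- `(U, S_e, A)` from the process tuple (for `I(U; S_e | A)`). -/
def toUSeA {𝒜 𝒰 𝒮e 𝒮 𝒮d 𝒳 𝒴 𝒵 : Type} (t : 𝒜 × 𝒰 × 𝒮e × 𝒮 × 𝒮d × 𝒳 × 𝒴 × 𝒵) :
    𝒰 × 𝒮e × 𝒜 :=
  (t.2.1, t.2.2.1, t.1)

/-- `((A,U),(S_d,Y))` from the process tuple. -/
def toAUSdY {𝒜 𝒰 𝒮e 𝒮 𝒮d 𝒳 𝒴 𝒵 : Type} (t : 𝒜 × 𝒰 × 𝒮e × 𝒮 × 𝒮d × 𝒳 × 𝒴 × 𝒵) :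
    (𝒜 × 𝒰) × (𝒮d × 𝒴) :=
  ((t.1, t.2.1), (t.2.2.2.2.1, t.2.2.2.2.2.2.1))


/-! The normalised distortion of the memoryless process is the average of the `n` independent
variables `d(S_i, Ŝ*_i) ∈ [0, D_max]`, so its variance is at most `D_max² / n`; by Chebyshev it
concentrates at its mean, and its limsup in probability equals the limsup of the mean
distortions. These means are the same for both processes because the per-coordinate laws agree,
and for any bounded distortion the limsup of the means is a lower bound for the limsup in
probability. -/

theorem prSet_ne_top {α : Type} (p : PMF α) (s : Set α) : prSet p s ≠ ⊤ :=
  p.tsum_coe_indicator_ne_top s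

section FiniteExpectation

variable {α β ι : Type} [Fintype α]

theorem expect_eq_sum (p : PMF α) (f : α → ℝ) : expect p f = ∑ a, (p a).toReal * f a :=
  tsum_fintype _

theorem sum_toReal_eq_one (p : PMF α) : ∑ a, (p a).toReal = 1 := by
  rw [← ENNReal.toReal_sum fun a _ => p.apply_ne_top a, ← ENNReal.toReal_one, ← p.tsum_coe,
    tsum_fintype]

theorem expect_mono (p : PMF α) {f g : α → ℝ} (h : ∀ a, f a ≤ g a) :
    expect p f ≤ expect p g := by
  simp only [expect_eq_sum]
  exact Finset.sum_le_sum fun a _ => mul_le_mul_of_nonneg_left (h a) ENNReal.toReal_nonneg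

theorem expect_nonneg (p : PMF α) {f : α → ℝ} (h : ∀ a, 0 ≤ f a) : 0 ≤ expect p f := by
  rw [expect_eq_sum]
  exact Finset.sum_nonneg fun a _ => mul_nonneg ENNReal.toReal_nonneg (h a)

theorem expect_const (p : PMF α) (c : ℝ) : expect p (fun _ => c) = c := by
  rw [expect_eq_sum, ← Finset.sum_mul, sum_toReal_eq_one, one_mul]

theorem expect_add (p : PMF α) (f g : α → ℝ) :
    expect p (fun a => f a + g a) = expect p f + expect p g := by
  simp only [expect_eq_sum, mul_add, Finset.sum_add_distrib]

theorem expect_const_mul (p : PMF α) (c : ℝ) (f : α → ℝ) :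
    expect p (fun a => c * f a) = c * expect p f := by
  simp only [expect_eq_sum, Finset.mul_sum, mul_left_comm]

theorem expect_sum (p : PMF α) (s : Finset ι) (F : ι → α → ℝ) :
    expect p (fun a => ∑ i ∈ s, F i a) = ∑ i ∈ s, expect p (F i) := by
  simp only [expect_eq_sum, Finset.mul_sum]
  exact Finset.sum_comm

theorem expect_map [Fintype β] (p : PMF α) (h : α → β) (f : β → ℝ) :
    expect (p.map h) f = expect p (f ∘ h) := by
  classical
  have hmap : ∀ b, ((p.map h) b).toReal = ∑ a, if b = h a then (p a).toReal else 0 := by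
    intro b
    rw [PMF.map_apply, tsum_fintype, ENNReal.toReal_sum fun a _ => by
      split <;> simp [p.apply_ne_top a]]
    exact Finset.sum_congr rfl fun a _ => by split <;> simp
  simp only [expect_eq_sum, hmap, Finset.sum_mul, ite_mul, zero_mul]
  rw [Finset.sum_comm]
  simp [Finset.sum_ite_eq']

theorem toReal_prSet (p : PMF α) (s : Set α) :
    (prSet p s).toReal = expect p (s.indicator 1) := by
  classical
  rw [prSet, tsum_fintype, ENNReal.toReal_sum fun a _ => by
    by_cases ha : a ∈ s <;> simp [ha, p.apply_ne_top a], expect_eq_sum]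
  refine Finset.sum_congr rfl fun a _ => ?_
  by_cases ha : a ∈ s <;> simp [ha]

theorem toReal_prSet_le_expect_div (p : PMF α) {s : Set α} {h : α → ℝ} {c : ℝ}
    (hh : ∀ a, 0 ≤ h a) (hc : 0 < c) (hs : ∀ a ∈ s, c ≤ h a) :
    (prSet p s).toReal ≤ expect p h / c := by
  rw [le_div_iff₀ hc, toReal_prSet, mul_comm, ← expect_const_mul]
  refine expect_mono p fun a => ?_
  by_cases ha : a ∈ s
  · simpa [ha] using hs a ha
  · simpa [ha] using hh a

theorem expect_prod_apply [DecidableEq ι] [Fintype ι] [Fintype β] {P : PMF (ι → β)}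
    {Q : ι → PMF β} (hP : ∀ v, P v = ∏ i, Q i (v i)) (F : ι → β → ℝ) :
    expect P (fun v => ∏ i, F i (v i)) = ∏ i, expect (Q i) (F i) := by
  simp only [expect_eq_sum, hP, ENNReal.toReal_prod, ← Finset.prod_mul_distrib]
  exact (Fintype.prod_sum fun i b => (Q i b).toReal * F i b).symm

end FiniteExpectation

section Variance

variable {α β ι : Type} [Fintype α]

def var (p : PMF α) (f : α → ℝ) : ℝ :=
  expect p fun a => (f a - expect p f) ^ 2

theorem var_nonneg (p : PMF α) (f : α → ℝ) : 0 ≤ var p f :=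
  expect_nonneg p fun _ => sq_nonneg _

theorem var_map [Fintype β] (p : PMF α) (h : α → β) (f : β → ℝ) :
    var (p.map h) f = var p (f ∘ h) := by
  simp only [var, expect_map]
  rfl

theorem var_const_mul (p : PMF α) (c : ℝ) (f : α → ℝ) :
    var p (fun a => c * f a) = c ^ 2 * var p f := by
  simp only [var, expect_const_mul, ← mul_sub, mul_pow]

theorem var_le_sq (p : PMF α) {f : α → ℝ} {C : ℝ} (hf₀ : ∀ a, 0 ≤ f a) (hfC : ∀ a, f a ≤ C) :
    var p f ≤ C ^ 2 := by
  have hmean₀ : 0 ≤ expect p f := expect_nonneg p hf₀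
  have hmeanC : expect p f ≤ C := (expect_mono p hfC).trans_eq (expect_const p C)
  calc var p f ≤ expect p fun _ => C ^ 2 :=
        expect_mono p fun a =>
          sq_le_sq' (by linarith [hfC a, hf₀ a]) (by linarith [hfC a, hf₀ a])
    _ = C ^ 2 := expect_const p _

section Product

theorem prod_ite_eq_ite_eq {M : Type} [CommMonoid M] [DecidableEq ι] [Fintype ι] {i j : ι}
    (hij : i ≠ j) (a b : ι → M) :
    ∏ k, (if k = i then a k else if k = j then b k else 1) = a i * b j := by
  rw [Finset.prod_eq_mul i j hij (fun k _ hk => by simp [hk.1, hk.2]) (by simp) (by simp)]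
  simp [hij.symm]

variable [DecidableEq ι] [Fintype ι] [Fintype β] {P : PMF (ι → β)} {Q : ι → PMF β}

theorem expect_apply_of_prod (hP : ∀ v, P v = ∏ i, Q i (v i)) (i : ι) (F : β → ℝ) :
    expect P (fun v => F (v i)) = expect (Q i) F := by
  have h := expect_prod_apply hP fun k b => if k = i then F b else 1
  simp only [Finset.prod_ite_eq', Finset.mem_univ, if_true] at h
  rw [h, Finset.prod_eq_single i (fun k _ hk => by simp [hk, expect_const]) (by simp)]
  simp

theorem expect_mul_apply_of_prod (hP : ∀ v, P v = ∏ i, Q i (v i)) {i j : ι} (hij : i ≠ j)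
    (F G : β → ℝ) :
    expect P (fun v => F (v i) * G (v j)) = expect (Q i) F * expect (Q j) G := by
  have h := expect_prod_apply hP fun k b => if k = i then F b else if k = j then G b else 1
  have hQ : ∀ k, expect (Q k) (fun b => if k = i then F b else if k = j then G b else 1) =
      if k = i then expect (Q i) F else if k = j then expect (Q j) G else 1 := by
    intro k
    split_ifs with hi hj
    · subst hi; rfl
    · subst hj; rfl
    · exact expect_const _ _
  simpa only [hQ, prod_ite_eq_ite_eq hij] using h

theorem var_sum_of_prod (hP : ∀ v, P v = ∏ i, Q i (v i)) (f : ι → β → ℝ) :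
    var P (fun v => ∑ i, f i (v i)) = ∑ i, var (Q i) (f i) := by
  set X : ι → β → ℝ := fun i b => f i b - expect (Q i) (f i)
  have hmean : expect P (fun v => ∑ i, f i (v i)) = ∑ i, expect (Q i) (f i) := by
    rw [expect_sum]
    exact Finset.sum_congr rfl fun i _ => expect_apply_of_prod hP i (f i)
  have hcentered : ∀ i, expect (Q i) (X i) = 0 := fun i => by
    simp only [X, sub_eq_add_neg, expect_add, expect_const, add_neg_cancel]
  have hcov : ∀ i j, expect P (fun v => X i (v i) * X j (v j)) =
      if i = j then var (Q i) (f i) else 0 := by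
    intro i j
    by_cases hij : i = j
    · subst hij
      simp only [← sq]
      exact expect_apply_of_prod hP i fun b => X i b ^ 2
    · rw [expect_mul_apply_of_prod hP hij, hcentered, zero_mul, if_neg hij]
  calc var P (fun v => ∑ i, f i (v i))
      = expect P (fun v => ∑ i, ∑ j, X i (v i) * X j (v j)) := by
        simp only [var, hmean, X, ← Finset.sum_sub_distrib, sq, Finset.sum_mul_sum]
    _ = ∑ i, var (Q i) (f i) := by
        simp only [expect_sum, hcov, Finset.sum_ite_eq, Finset.mem_univ, if_true]

end Product

end Variance

section LimsupInProbability

variable {Ω : ℕ → Type} (p : ∀ n, PMF (Ω n)) {Z : ∀ n, Ω n → ℝ}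

theorem nonneg_of_tendsto_prSet (hZ₀ : ∀ n ω, 0 ≤ Z n ω) {a : ℝ}
    (ha : Tendsto (fun n => prSet (p n) {ω | a < Z n ω}) atTop (nhds 0)) : 0 ≤ a := by
  by_contra! hneg
  have hone : ∀ n, prSet (p n) {ω | a < Z n ω} = 1 := fun n => by
    simp [prSet, fun ω => hneg.trans_le (hZ₀ n ω), (p n).tsum_coe]
  simp only [hone] at ha
  exact one_ne_zero (tendsto_nhds_unique tendsto_const_nhds ha)

theorem pLimsup_le_of_tendsto (hZ₀ : ∀ n ω, 0 ≤ Z n ω) {L : ℝ}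
    (h : ∀ ε > 0, Tendsto (fun n => prSet (p n) {ω | L + ε < Z n ω}) atTop (nhds 0)) :
    pLimsup p Z ≤ L :=
  le_of_forall_pos_le_add fun ε hε =>
    csInf_le ⟨0, fun _ ha => nonneg_of_tendsto_prSet p hZ₀ ha⟩ (h ε hε)

variable [∀ n, Fintype (Ω n)] {C : ℝ}

theorem limsup_expect_le_pLimsup (hZ₀ : ∀ n ω, 0 ≤ Z n ω) (hZC : ∀ n ω, Z n ω ≤ C) :
    limsup (fun n => expect (p n) (Z n)) atTop ≤ pLimsup p Z := by
  have hC : Tendsto (fun n => prSet (p n) {ω | C < Z n ω}) atTop (nhds 0) := by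
    simp [prSet, fun n ω => not_lt.2 (hZC n ω)]
  refine le_csInf ⟨C, hC⟩ fun a ha => ?_
  have ha₀ : 0 ≤ a := nonneg_of_tendsto_prSet p hZ₀ ha
  have hbound : ∀ n, expect (p n) (Z n) ≤ a + C * (prSet (p n) {ω | a < Z n ω}).toReal := by
    intro n
    calc expect (p n) (Z n)
        ≤ expect (p n) (fun ω => a + C * {ω | a < Z n ω}.indicator 1 ω) := by
          refine expect_mono _ fun ω => ?_
          by_cases hω : a < Z n ω
          · simpa [hω] using (hZC n ω).trans (le_add_of_nonneg_left ha₀)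
          · simpa [hω] using not_lt.1 hω
      _ = a + C * (prSet (p n) {ω | a < Z n ω}).toReal := by
          rw [expect_add, expect_const, expect_const_mul, toReal_prSet]
  have hlim :
      Tendsto (fun n => a + C * (prSet (p n) {ω | a < Z n ω}).toReal) atTop (nhds a) := by
    have hprob := (ENNReal.tendsto_toReal_zero_iff fun n => prSet_ne_top _ _).2 ha
    simpa using (hprob.const_mul C).const_add a
  calc limsup (fun n => expect (p n) (Z n)) atTop
      ≤ limsup (fun n => a + C * (prSet (p n) {ω | a < Z n ω}).toReal) atTop :=
        limsup_le_limsup (Eventually.of_forall hbound)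
          (isBoundedUnder_of ⟨0, fun n => expect_nonneg _ (hZ₀ n)⟩).isCoboundedUnder_le
          hlim.isBoundedUnder_le
    _ = a := hlim.limsup_eq

theorem pLimsup_le_limsup_expect (hZ₀ : ∀ n ω, 0 ≤ Z n ω) (hZC : ∀ n ω, Z n ω ≤ C)
    (hvar : Tendsto (fun n => var (p n) (Z n)) atTop (nhds 0)) :
    pLimsup p Z ≤ limsup (fun n => expect (p n) (Z n)) atTop := by
  set L := limsup (fun n => expect (p n) (Z n)) atTop
  refine pLimsup_le_of_tendsto p hZ₀ fun ε hε => ?_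
  have hmean : ∀ᶠ n in atTop, expect (p n) (Z n) < L + ε / 2 :=
    eventually_lt_of_limsup_lt (by linarith)
      (isBoundedUnder_of ⟨C, fun n => (expect_mono _ (hZC n)).trans_eq (expect_const _ C)⟩)
  have hchebyshev : ∀ᶠ n in atTop,
      (prSet (p n) {ω | L + ε < Z n ω}).toReal ≤ var (p n) (Z n) / (ε / 2) ^ 2 := by
    filter_upwards [hmean] with n hn
    refine toReal_prSet_le_expect_div _ (fun ω => sq_nonneg _) (by positivity) fun ω hω => ?_
    have hω : L + ε < Z n ω := hω
    exact pow_le_pow_left₀ (by positivity) (by linarith) 2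
  rw [← ENNReal.tendsto_toReal_zero_iff fun n => prSet_ne_top _ _]
  exact squeeze_zero' (Eventually.of_forall fun n => ENNReal.toReal_nonneg) hchebyshev
    (by simpa using hvar.div_const ((ε / 2) ^ 2))

theorem pLimsup_eq_limsup_expect (hZ₀ : ∀ n ω, 0 ≤ Z n ω) (hZC : ∀ n ω, Z n ω ≤ C)
    (hvar : Tendsto (fun n => var (p n) (Z n)) atTop (nhds 0)) :
    pLimsup p Z = limsup (fun n => expect (p n) (Z n)) atTop :=
  (pLimsup_le_limsup_expect p hZ₀ hZC hvar).antisymm (limsup_expect_le_pLimsup p hZ₀ hZC)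

end LimsupInProbability

section Distortion

abbrev ProcTuple (𝒜 𝒰 𝒮e 𝒮 𝒮d 𝒳 𝒴 𝒵 : Type) (n : ℕ) : Type :=
  Vec 𝒜 n × Vec 𝒰 n × Vec 𝒮e n × Vec 𝒮 n × Vec 𝒮d n × Vec 𝒳 n × Vec 𝒴 n × Vec 𝒵 n

variable {𝒜 𝒰 𝒳 𝒮e 𝒮 𝒮d 𝒴 𝒵 Sh : Type} {dn : ∀ n, Vec 𝒮 n → Vec Sh n → ℝ}
  {d : 𝒮 → Sh → ℝ} {Dmax : ℝ} (g : ∀ n, Vec 𝒳 n → Vec 𝒜 n → Vec 𝒮e n → Vec 𝒵 n → Vec Sh n)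
  (n : ℕ)

/-- The pairs `(S_i, Ŝ_i)` read off a process tuple. -/
def statePairs (t : ProcTuple 𝒜 𝒰 𝒮e 𝒮 𝒮d 𝒳 𝒴 𝒵 n) : Vec (𝒮 × Sh) n :=
  fun i => (t.2.2.2.1 i, g n t.2.2.2.2.2.1 t.1 t.2.2.1 t.2.2.2.2.2.2.2 i)

theorem procDistRV_eq_sum
    (hdn : ∀ n (s : Vec 𝒮 n) (sh : Vec Sh n), dn n s sh = ∑ i : Fin n, d (s i) (sh i))
    (t : ProcTuple 𝒜 𝒰 𝒮e 𝒮 𝒮d 𝒳 𝒴 𝒵 n) :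
    procDistRV dn g n t = ∑ i, d (statePairs g n t i).1 (statePairs g n t i).2 :=
  hdn n _ _

theorem inv_mul_procDistRV_nonneg
    (hdn : ∀ n (s : Vec 𝒮 n) (sh : Vec Sh n), dn n s sh = ∑ i : Fin n, d (s i) (sh i))
    (hd₀ : ∀ s sh, 0 ≤ d s sh)
    (t : ProcTuple 𝒜 𝒰 𝒮e 𝒮 𝒮d 𝒳 𝒴 𝒵 n) :
    0 ≤ (n : ℝ)⁻¹ * procDistRV dn g n t := by
  rw [procDistRV_eq_sum g n hdn]
  exact mul_nonneg (by positivity) (Finset.sum_nonneg fun i _ => hd₀ _ _)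

theorem inv_mul_procDistRV_le
    (hdn : ∀ n (s : Vec 𝒮 n) (sh : Vec Sh n), dn n s sh = ∑ i : Fin n, d (s i) (sh i))
    (hd₁ : ∀ s sh, d s sh ≤ Dmax) (hDmax : 0 ≤ Dmax)
    (t : ProcTuple 𝒜 𝒰 𝒮e 𝒮 𝒮d 𝒳 𝒴 𝒵 n) :
    (n : ℝ)⁻¹ * procDistRV dn g n t ≤ Dmax := by
  rw [procDistRV_eq_sum g n hdn]
  rcases n.eq_zero_or_pos with rfl | hn
  · simpa using hDmax
  · rw [inv_mul_le_iff₀ (by positivity)]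
    calc ∑ i, d (statePairs g n t i).1 (statePairs g n t i).2
        ≤ ∑ _i : Fin n, Dmax := Finset.sum_le_sum fun i _ => hd₁ _ _
      _ = n * Dmax := by simp

variable [Fintype 𝒜] [Fintype 𝒰] [Fintype 𝒳] [Fintype 𝒮e] [Fintype 𝒮] [Fintype 𝒮d]
  [Fintype 𝒴] [Fintype 𝒵] [Fintype Sh]

theorem expect_procDistRV
    (hdn : ∀ n (s : Vec 𝒮 n) (sh : Vec Sh n), dn n s sh = ∑ i : Fin n, d (s i) (sh i))
    (p : PMF (ProcTuple 𝒜 𝒰 𝒮e 𝒮 𝒮d 𝒳 𝒴 𝒵 n)) :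
    expect p (procDistRV dn g n) =
      ∑ i, expect (p.map fun t => statePairs g n t i) (fun r => d r.1 r.2) := by
  simp only [funext (procDistRV_eq_sum g n hdn), expect_sum, expect_map]
  rfl

theorem var_inv_mul_procDistRV_le
    (hdn : ∀ n (s : Vec 𝒮 n) (sh : Vec Sh n), dn n s sh = ∑ i : Fin n, d (s i) (sh i))
    (hd₀ : ∀ s sh, 0 ≤ d s sh) (hd₁ : ∀ s sh, d s sh ≤ Dmax)
    (p : PMF (ProcTuple 𝒜 𝒰 𝒮e 𝒮 𝒮d 𝒳 𝒴 𝒵 n))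
    (hp : ∀ v, p.map (statePairs g n) v = ∏ i, (p.map fun t => statePairs g n t i) (v i)) :
    var p (fun t => (n : ℝ)⁻¹ * procDistRV dn g n t) ≤ Dmax ^ 2 / n := by
  calc var p (fun t => (n : ℝ)⁻¹ * procDistRV dn g n t)
      = var (p.map (statePairs g n)) (fun v => (n : ℝ)⁻¹ * ∑ i, d (v i).1 (v i).2) := by
        simp only [var_map, procDistRV_eq_sum g n hdn]
        rfl
    _ = (n : ℝ)⁻¹ ^ 2 *
          ∑ i, var (p.map fun t => statePairs g n t i) (fun r => d r.1 r.2) := by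
        rw [var_const_mul, var_sum_of_prod hp fun _ r => d r.1 r.2]
    _ ≤ (n : ℝ)⁻¹ ^ 2 * ∑ _i : Fin n, Dmax ^ 2 := by
        gcongr with i
        exact var_le_sq _ (fun r => hd₀ r.1 r.2) (fun r => hd₁ r.1 r.2)
    _ = Dmax ^ 2 / n := by
        rw [Finset.sum_const, Finset.card_univ, Fintype.card_fin, nsmul_eq_mul]
        rcases n.eq_zero_or_pos with rfl | hn
        · simp
        · field_simp

end Distortion
theorem memoryless_input_distortion_general
    (𝒜 𝒰 𝒰' 𝒳 𝒮e 𝒮 𝒮d 𝒴 𝒵 Sh : Type)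
    [Fintype 𝒜] [Fintype 𝒰] [Fintype 𝒰'] [Fintype 𝒳] [Fintype 𝒮e] [Fintype 𝒮]
    [Fintype 𝒮d] [Fintype 𝒴] [Fintype 𝒵] [Fintype Sh]
    (q : ∀ n, Vec 𝒜 n → PMF (Vec 𝒮e n × Vec 𝒮 n × Vec 𝒮d n))
    (W : ∀ n, Vec 𝒳 n × Vec 𝒮 n → PMF (Vec 𝒴 n × Vec 𝒵 n))
    (dn : ∀ n, Vec 𝒮 n → Vec Sh n → ℝ)
    (d : 𝒮 → Sh → ℝ) (Dmax : ℝ)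
    (hdn : ∀ n (s : Vec 𝒮 n) (sh : Vec Sh n), dn n s sh = ∑ i : Fin n, d (s i) (sh i))
    (hd₀ : ∀ s sh, 0 ≤ d s sh) (hd₁ : ∀ s sh, d s sh ≤ Dmax)
    (g : ∀ n, Vec 𝒳 n → Vec 𝒜 n → Vec 𝒮e n → Vec 𝒵 n → Vec Sh n)
    -- the arbitrary admissible input process
    (PA : ∀ n, PMF (Vec 𝒜 n))
    (PU : ∀ n, Vec 𝒜 n × Vec 𝒮e n → PMF (Vec 𝒰 n))
    (PX : ∀ n, Vec 𝒰 n × Vec 𝒮e n → PMF (Vec 𝒳 n))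
    -- the memoryless (product-form) input process
    (PAs : ∀ n, PMF (Vec 𝒜 n))
    (PUs : ∀ n, Vec 𝒜 n × Vec 𝒮e n → PMF (Vec 𝒰' n))
    (PXs : ∀ n, Vec 𝒰' n × Vec 𝒮e n → PMF (Vec 𝒳 n))
    -- the per-coordinate joint laws of `(S_i, Ŝ*_i)` and `(S_i, Ŝ_i)` coincide
    (hmarg : ∀ n (i : Fin n),
      (procJoint q W PAs PUs PXs n).map
        (fun t => (t.2.2.2.1 i, g n t.2.2.2.2.2.1 t.1 t.2.2.1 t.2.2.2.2.2.2.2 i)) =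
      (procJoint q W PA PU PX n).map
        (fun t => (t.2.2.2.1 i, g n t.2.2.2.2.2.1 t.1 t.2.2.1 t.2.2.2.2.2.2.2 i)))
    -- the pairs `(S_i, Ŝ*_i)` are independent across coordinates
    (hindep : ∀ n (v : Vec (𝒮 × Sh) n),
      ((procJoint q W PAs PUs PXs n).map
        (fun t => fun i : Fin n =>
          (t.2.2.2.1 i, g n t.2.2.2.2.2.1 t.1 t.2.2.1 t.2.2.2.2.2.2.2 i))) v =
      ∏ i : Fin n, ((procJoint q W PAs PUs PXs n).map
        (fun t => (t.2.2.2.1 i, g n t.2.2.2.2.2.1 t.1 t.2.2.1 t.2.2.2.2.2.2.2 i))) (v i)) :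
    pLimsup (fun n => procJoint q W PAs PUs PXs n)
        (fun n t => (n : ℝ)⁻¹ * procDistRV dn g n t) ≤
      pLimsup (fun n => procJoint q W PA PU PX n)
        (fun n t => (n : ℝ)⁻¹ * procDistRV dn g n t) ∧
    limsup (fun n : ℕ => (n : ℝ)⁻¹ *
        expect (procJoint q W PAs PUs PXs n) (procDistRV dn g n)) atTop =
      limsup (fun n : ℕ => (n : ℝ)⁻¹ *
        expect (procJoint q W PA PU PX n) (procDistRV dn g n)) atTop ∧
    pLimsup (fun n => procJoint q W PAs PUs PXs n)
        (fun n t => (n : ℝ)⁻¹ * procDistRV dn g n t) =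
      limsup (fun n : ℕ => (n : ℝ)⁻¹ * ∑ i : Fin n,
        expect ((procJoint q W PA PU PX n).map
          (fun t => (t.2.2.2.1 i, g n t.2.2.2.2.2.1 t.1 t.2.2.1 t.2.2.2.2.2.2.2 i)))
          (fun p => d p.1 p.2)) atTop ∧
    pLimsup (fun n => procJoint q W PAs PUs PXs n)
        (fun n t => (n : ℝ)⁻¹ * procDistRV dn g n t) =
      limsup (fun n : ℕ => (n : ℝ)⁻¹ *
        expect (procJoint q W PA PU PX n) (procDistRV dn g n)) atTop := by
  have hDmax : 0 ≤ Dmax := by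
    obtain ⟨t, -⟩ := (procJoint q W PA PU PX 1).support_nonempty
    exact (hd₀ _ _).trans (hd₁ (t.2.2.2.1 0) (g 1 t.2.2.2.2.2.1 t.1 t.2.2.1 t.2.2.2.2.2.2.2 0))
  have hmean : ∀ n, expect (procJoint q W PAs PUs PXs n) (procDistRV dn g n) =
      expect (procJoint q W PA PU PX n) (procDistRV dn g n) := fun n => by
    simp only [expect_procDistRV g n hdn]
    exact Finset.sum_congr rfl fun i _ => congrArg (expect · _) (hmarg n i)
  have hvar : Tendsto (fun n => var (procJoint q W PAs PUs PXs n)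
      fun t => (n : ℝ)⁻¹ * procDistRV dn g n t) atTop (nhds 0) :=
    squeeze_zero (fun n => var_nonneg _ _)
      (fun n => var_inv_mul_procDistRV_le g n hdn hd₀ hd₁ _ (hindep n))
      (tendsto_const_div_atTop_nhds_zero_nat _)
  have hconc : pLimsup (fun n => procJoint q W PAs PUs PXs n)
      (fun n t => (n : ℝ)⁻¹ * procDistRV dn g n t) =
      limsup (fun n : ℕ => (n : ℝ)⁻¹ *
        expect (procJoint q W PA PU PX n) (procDistRV dn g n)) atTop := by
    rw [pLimsup_eq_limsup_expect _ (fun n => inv_mul_procDistRV_nonneg g n hdn hd₀)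
      (fun n => inv_mul_procDistRV_le g n hdn hd₁ hDmax) hvar]
    simp only [expect_const_mul, hmean]
  refine ⟨hconc.trans_le ?_, by simp only [hmean], hconc.trans ?_, hconc⟩
  · simpa only [expect_const_mul] using
      limsup_expect_le_pLimsup (fun n => procJoint q W PA PU PX n)
      (fun n => inv_mul_procDistRV_nonneg g n hdn hd₀)
      (fun n => inv_mul_procDistRV_le g n hdn hd₁ hDmax)
  · simp only [expect_procDistRV g _ hdn]
    rfl

/-- **Lemma 2** (memoryless inputs do not increase the distortion). Under memoryless
states and channel and an additive bounded distortion, if the reproduction process `Ŝ*`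
induced by a memoryless (product-form) input process has, coordinatewise, the same joint
law with the state as the reproduction process `Ŝ` of an arbitrary admissible input
process, and the per-coordinate pairs `(S_i, Ŝ*_i)` are independent, then
`D̄(S,Ŝ*) ≤ D̄(S,Ŝ)` and `D(S,Ŝ*) = D(S,Ŝ)`; in fact
`D̄(S,Ŝ*) = limsup_n (1/n) Σ_i E[d(S_i,Ŝ_i)] = D(S,Ŝ)`. -/
theorem memoryless_input_distortion
    (𝒜 𝒰 𝒰' 𝒳 𝒮e 𝒮 𝒮d 𝒴 𝒵 Sh : Type)
    [Fintype 𝒜] [Fintype 𝒰] [Fintype 𝒰'] [Fintype 𝒳] [Fintype 𝒮e] [Fintype 𝒮]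
    [Fintype 𝒮d] [Fintype 𝒴] [Fintype 𝒵] [Fintype Sh]
    (q : ∀ n, Vec 𝒜 n → PMF (Vec 𝒮e n × Vec 𝒮 n × Vec 𝒮d n))
    (W : ∀ n, Vec 𝒳 n × Vec 𝒮 n → PMF (Vec 𝒴 n × Vec 𝒵 n))
    (dn : ∀ n, Vec 𝒮 n → Vec Sh n → ℝ)
    (qs : ℕ → 𝒜 → PMF (𝒮e × 𝒮 × 𝒮d)) (Wc : ℕ → 𝒳 × 𝒮 → PMF (𝒴 × 𝒵))
    (d : 𝒮 → Sh → ℝ) (Dmax : ℝ)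
    (hq : ∀ n (a : Vec 𝒜 n) (se : Vec 𝒮e n) (s : Vec 𝒮 n) (sd : Vec 𝒮d n),
      (q n a) (se, s, sd) = ∏ i : Fin n, (qs i.1 (a i)) (se i, s i, sd i))
    (hW : ∀ n (x : Vec 𝒳 n) (s : Vec 𝒮 n) (y : Vec 𝒴 n) (z : Vec 𝒵 n),
      (W n (x, s)) (y, z) = ∏ i : Fin n, (Wc i.1 (x i, s i)) (y i, z i))
    (hdn : ∀ n (s : Vec 𝒮 n) (sh : Vec Sh n), dn n s sh = ∑ i : Fin n, d (s i) (sh i))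
    (hd₀ : ∀ s sh, 0 ≤ d s sh) (hd₁ : ∀ s sh, d s sh ≤ Dmax)
    (g : ∀ n, Vec 𝒳 n → Vec 𝒜 n → Vec 𝒮e n → Vec 𝒵 n → Vec Sh n)
    -- the arbitrary admissible input process
    (PA : ∀ n, PMF (Vec 𝒜 n))
    (PU : ∀ n, Vec 𝒜 n × Vec 𝒮e n → PMF (Vec 𝒰 n))
    (PX : ∀ n, Vec 𝒰 n × Vec 𝒮e n → PMF (Vec 𝒳 n))
    -- the memoryless (product-form) input process
    (PAs : ∀ n, PMF (Vec 𝒜 n))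
    (PUs : ∀ n, Vec 𝒜 n × Vec 𝒮e n → PMF (Vec 𝒰' n))
    (PXs : ∀ n, Vec 𝒰' n × Vec 𝒮e n → PMF (Vec 𝒳 n))
    (PA1 : ℕ → PMF 𝒜) (PU1 : ℕ → 𝒜 → 𝒮e → PMF 𝒰') (PX1 : ℕ → 𝒰' → 𝒮e → PMF 𝒳)
    (hPAs : ∀ n (a : Vec 𝒜 n), (PAs n) a = ∏ i : Fin n, (PA1 i.1) (a i))
    (hPUs : ∀ n (a : Vec 𝒜 n) (se : Vec 𝒮e n) (u : Vec 𝒰' n),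
      (PUs n (a, se)) u = ∏ i : Fin n, (PU1 i.1 (a i) (se i)) (u i))
    (hPXs : ∀ n (u : Vec 𝒰' n) (se : Vec 𝒮e n) (x : Vec 𝒳 n),
      (PXs n (u, se)) x = ∏ i : Fin n, (PX1 i.1 (u i) (se i)) (x i))
    -- the per-coordinate joint laws of `(S_i, Ŝ*_i)` and `(S_i, Ŝ_i)` coincide
    (hmarg : ∀ n (i : Fin n),
      (procJoint q W PAs PUs PXs n).map
        (fun t => (t.2.2.2.1 i, g n t.2.2.2.2.2.1 t.1 t.2.2.1 t.2.2.2.2.2.2.2 i)) =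
      (procJoint q W PA PU PX n).map
        (fun t => (t.2.2.2.1 i, g n t.2.2.2.2.2.1 t.1 t.2.2.1 t.2.2.2.2.2.2.2 i)))
    -- the pairs `(S_i, Ŝ*_i)` are independent across coordinates
    (hindep : ∀ n (v : Vec (𝒮 × Sh) n),
      ((procJoint q W PAs PUs PXs n).map
        (fun t => fun i : Fin n =>
          (t.2.2.2.1 i, g n t.2.2.2.2.2.1 t.1 t.2.2.1 t.2.2.2.2.2.2.2 i))) v =
      ∏ i : Fin n, ((procJoint q W PAs PUs PXs n).map
        (fun t => (t.2.2.2.1 i, g n t.2.2.2.2.2.1 t.1 t.2.2.1 t.2.2.2.2.2.2.2 i))) (v i)) :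
    pLimsup (fun n => procJoint q W PAs PUs PXs n)
        (fun n t => (n : ℝ)⁻¹ * procDistRV dn g n t) ≤
      pLimsup (fun n => procJoint q W PA PU PX n)
        (fun n t => (n : ℝ)⁻¹ * procDistRV dn g n t) ∧
    limsup (fun n : ℕ => (n : ℝ)⁻¹ *
        expect (procJoint q W PAs PUs PXs n) (procDistRV dn g n)) atTop =
      limsup (fun n : ℕ => (n : ℝ)⁻¹ *
        expect (procJoint q W PA PU PX n) (procDistRV dn g n)) atTop ∧
    pLimsup (fun n => procJoint q W PAs PUs PXs n)
        (fun n t => (n : ℝ)⁻¹ * procDistRV dn g n t) =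
      limsup (fun n : ℕ => (n : ℝ)⁻¹ * ∑ i : Fin n,
        expect ((procJoint q W PA PU PX n).map
          (fun t => (t.2.2.2.1 i, g n t.2.2.2.2.2.1 t.1 t.2.2.1 t.2.2.2.2.2.2.2 i)))
          (fun p => d p.1 p.2)) atTop ∧
    pLimsup (fun n => procJoint q W PAs PUs PXs n)
        (fun n t => (n : ℝ)⁻¹ * procDistRV dn g n t) =
      limsup (fun n : ℕ => (n : ℝ)⁻¹ *
        expect (procJoint q W PA PU PX n) (procDistRV dn g n)) atTop :=
  memoryless_input_distortion_general 𝒜 𝒰 𝒰' 𝒳 𝒮e 𝒮 𝒮d 𝒴 𝒵 Sh q W dn d Dmax hdn hd₀ hd₁ g PA PU PX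
    PAs PUs PXs hmarg hindep

end ISAC
end
end

section
/- Define H(x) := σ_s σ_z / (σ_s x² + σ_z) for x ∈ ℝ, and for D such that the feasible set is nonempty define C(D) := max over α ∈ [0,1] with E_{X ~ N(0, α P_X)}[H(X)] ≤ D of (1/2) E[ log( (α S² P_X + σ) / σ ) ], where the outer expectation is over the fading coefficient S. Then C(D) is a non-decreasing and concave function of D. -/
open Filter MeasureTheory ProbabilityTheory

noncomputable section

namespace ISAC

/-- `H(x) = σ_s σ_z / (σ_s x² + σ_z)`, the per-symbol MMSE of the symbolwise state
estimator given the input symbol `x`. -/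
def Hfun (σs σz : ℝ) (x : ℝ) : ℝ := σs * σz / (σs * x ^ 2 + σz)

/-- The feasible set of distortion levels `D`: those admitting some `α ∈ [0,1]` with
`E_{X ~ N(0, α P_X)}[H(X)] ≤ D`. -/
def feasible (σs σz PX : ℝ) (D : ℝ) : Prop :=
  ∃ α ∈ Set.Icc (0 : ℝ) 1,
    (∫ x, Hfun σs σz x ∂(gaussianReal 0 (α * PX).toNNReal)) ≤ D

/-- The capacity–distortion function of the AWGN channel with ergodic fading:
`C(D) = max over α ∈ [0,1] with E_{X ~ N(0, α P_X)}[H(X)] ≤ D of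
(1/2) E_S[log((α S² P_X + σ)/σ)]`. -/
def Cfading (σ σz σs PX : ℝ) (μS : Measure ℝ) (D : ℝ) : ℝ :=
  sSup {r : ℝ | ∃ α ∈ Set.Icc (0 : ℝ) 1,
    (∫ x, Hfun σs σz x ∂(gaussianReal 0 (α * PX).toNNReal)) ≤ D ∧
    r = (1 / 2) * ∫ s, Real.log ((α * s ^ 2 * PX + σ) / σ) ∂μS}

/-! ### Auxiliary definitions and lemmas -/

/-- The constraint functional `g(α) = E_{X ~ N(0, α P_X)}[H(X)]`. -/
def gfun (σs σz PX : ℝ) (α : ℝ) : ℝ :=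
  ∫ x, Hfun σs σz x ∂(gaussianReal 0 (α * PX).toNNReal)

/-- The objective functional `f(α) = (1/2) E_S[log((α S² P_X + σ)/σ)]`. -/
def ffun (σ PX : ℝ) (μS : Measure ℝ) (α : ℝ) : ℝ :=
  (1 / 2) * ∫ s, Real.log ((α * s ^ 2 * PX + σ) / σ) ∂μS

lemma Cfading_eq (σ σz σs PX : ℝ) (μS : Measure ℝ) (D : ℝ) :
    Cfading σ σz σs PX μS D = sSup {r : ℝ | ∃ α ∈ Set.Icc (0 : ℝ) 1,
      gfun σs σz PX α ≤ D ∧ r = ffun σ PX μS α} := rfl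

/-- Representation of `g` as an integral against the standard Gaussian. -/
lemma gfun_rep (σs σz PX : ℝ) (hσs : 0 < σs) (hσz : 0 < σz) (hPX : 0 < PX)
    (α : ℝ) (hα : 0 ≤ α) :
    gfun σs σz PX α = ∫ x, σs * σz / (σs * (α * PX) * x ^ 2 + σz) ∂(gaussianReal 0 1) := by
  have hαPX : (0:ℝ) ≤ α * PX := by positivity
  have hc2 : Real.sqrt (α * PX) ^ 2 = α * PX := Real.sq_sqrt hαPX
  have hHcont : Continuous (Hfun σs σz) := by
    apply Continuous.div (by continuity) (by continuity)
    intro x; positivity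
  have hmap : Measure.map (fun x => Real.sqrt (α * PX) * x) (gaussianReal 0 1)
      = gaussianReal 0 (α * PX).toNNReal := by
    rw [show (fun x => Real.sqrt (α * PX) * x) = (Real.sqrt (α * PX) * ·) from rfl,
      gaussianReal_map_const_mul]
    congr 1
    · simp
    · refine NNReal.coe_injective ?_
      simp [hc2, Real.coe_toNNReal _ hαPX]
  rw [gfun, ← hmap,
    integral_map (measurable_const_mul _).aemeasurable hHcont.aestronglyMeasurable]
  refine integral_congr_ae (Filter.Eventually.of_forall fun x => ?_)
  show Hfun σs σz _ = _
  rw [Hfun, mul_pow, hc2]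
  ring_nf

/-- Integrability of the integrand appearing in `gfun_rep`. -/
lemma gfun_int (σs σz PX : ℝ) (hσs : 0 < σs) (hσz : 0 < σz) (hPX : 0 < PX)
    (β : ℝ) (hβ : 0 ≤ β) :
    Integrable (fun x : ℝ => σs * σz / (σs * β * x ^ 2 + σz)) (gaussianReal 0 1) := by
  refine (integrable_const σs).mono' ?_ ?_
  · exact (Continuous.div (by continuity) (by continuity)
      (fun x => by positivity)).aestronglyMeasurable
  · refine Filter.Eventually.of_forall fun x => ?_
    have hd : (0:ℝ) < σs * β * x ^ 2 + σz := by positivity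
    rw [Real.norm_eq_abs, abs_of_nonneg (by positivity)]
    rw [div_le_iff₀ hd]
    nlinarith [sq_nonneg x, mul_nonneg (mul_nonneg hσs.le hβ) (sq_nonneg x)]

/-- Convexity inequality for `g`. -/
lemma gfun_convex (σs σz PX : ℝ) (hσs : 0 < σs) (hσz : 0 < σz) (hPX : 0 < PX)
    (α₁ α₂ a b : ℝ) (hα₁ : 0 ≤ α₁) (hα₂ : 0 ≤ α₂)
    (ha : 0 ≤ a) (hb : 0 ≤ b) (hab : a + b = 1) :
    gfun σs σz PX (a * α₁ + b * α₂) ≤ a * gfun σs σz PX α₁ + b * gfun σs σz PX α₂ := by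
  have hα : 0 ≤ a * α₁ + b * α₂ := by positivity
  rw [gfun_rep σs σz PX hσs hσz hPX _ hα, gfun_rep σs σz PX hσs hσz hPX _ hα₁,
    gfun_rep σs σz PX hσs hσz hPX _ hα₂, ← integral_const_mul, ← integral_const_mul,
    ← integral_add ((gfun_int σs σz PX hσs hσz hPX (α₁ * PX) (by positivity)).const_mul a)
      ((gfun_int σs σz PX hσs hσz hPX (α₂ * PX) (by positivity)).const_mul b)]
  refine integral_mono
    (gfun_int σs σz PX hσs hσz hPX ((a * α₁ + b * α₂) * PX) (by positivity))
    (((gfun_int σs σz PX hσs hσz hPX (α₁ * PX) (by positivity)).const_mul a).add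
      ((gfun_int σs σz PX hσs hσz hPX (α₂ * PX) (by positivity)).const_mul b)) fun x => ?_
  have hK : (0:ℝ) ≤ σs * PX * x ^ 2 := by positivity
  have hd₁ : (0:ℝ) < σs * (α₁ * PX) * x ^ 2 + σz := by positivity
  have hd₂ : (0:ℝ) < σs * (α₂ * PX) * x ^ 2 + σz := by positivity
  set d₁ : ℝ := σs * (α₁ * PX) * x ^ 2 + σz with hd₁def
  set d₂ : ℝ := σs * (α₂ * PX) * x ^ 2 + σz with hd₂def
  have hcomb : σs * ((a * α₁ + b * α₂) * PX) * x ^ 2 + σz = a * d₁ + b * d₂ := by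
    rw [hd₁def, hd₂def]; nlinarith [hab]
  have hd : 0 < a * d₁ + b * d₂ := by nlinarith
  show σs * σz / (σs * ((a * α₁ + b * α₂) * PX) * x ^ 2 + σz)
      ≤ a * (σs * σz / d₁) + b * (σs * σz / d₂)
  rw [hcomb]
  have hrhs : a * (σs * σz / d₁) + b * (σs * σz / d₂)
      = (a * (σs * σz) * d₂ + b * (σs * σz) * d₁) / (d₁ * d₂) := by
    field_simp
    try ring
  rw [hrhs, div_le_div_iff₀ hd (by positivity)]
  have hb' : b = 1 - a := by linarith
  subst hb'
  nlinarith [mul_nonneg (mul_nonneg (mul_nonneg ha hb) (mul_pos hσs hσz).le)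
    (sq_nonneg (d₁ - d₂)), mul_pos hd₁ hd₂]

set_option maxHeartbeats 1000000 in
/-- **Lemma 1**: `C(D)` is a non-decreasing and concave function of `D` (on the set of
distortion levels for which the feasible set is nonempty). -/
theorem Cfading_monotone_concave
    (σ σz σs PX : ℝ) (hσ : 0 < σ) (hσz : σ < σz) (hσs : 0 < σs) (hPX : 0 < PX)
    (μS : Measure ℝ) [IsProbabilityMeasure μS]
    (hvar : (∫ s, s ^ 2 ∂μS) = σs) :
    MonotoneOn (Cfading σ σz σs PX μS) {D | feasible σs σz PX D} ∧
    ConcaveOn ℝ {D | feasible σs σz PX D} (Cfading σ σz σs PX μS) := by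
  have hσz0 : 0 < σz := hσ.trans hσz
  -- integrability of s ↦ s²
  have hs2 : Integrable (fun s : ℝ => s ^ 2) μS := by
    by_contra h
    rw [integral_undef h] at hvar
    exact hσs.ne' hvar.symm
  -- basic facts about the log integrand
  have hψ_meas : ∀ α : ℝ, AEStronglyMeasurable
      (fun s : ℝ => Real.log ((α * s ^ 2 * PX + σ) / σ)) μS := fun α =>
    (Real.measurable_log.comp (by measurability)).aestronglyMeasurable
  have hψ_pos : ∀ (α : ℝ), 0 ≤ α → ∀ s : ℝ, 0 < α * s ^ 2 * PX + σ := by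
    intro α hα s
    nlinarith [mul_nonneg (mul_nonneg hα (sq_nonneg s)) hPX.le]
  have hψ_nonneg : ∀ (α : ℝ), 0 ≤ α → ∀ s : ℝ,
      0 ≤ Real.log ((α * s ^ 2 * PX + σ) / σ) := by
    intro α hα s
    apply Real.log_nonneg
    rw [le_div_iff₀ hσ]
    nlinarith [mul_nonneg (mul_nonneg hα (sq_nonneg s)) hPX.le]
  have hψ_le : ∀ (α : ℝ), 0 ≤ α → α ≤ 1 → ∀ s : ℝ,
      Real.log ((α * s ^ 2 * PX + σ) / σ) ≤ PX / σ * s ^ 2 := by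
    intro α hα hα1 s
    have h1 := Real.log_le_sub_one_of_pos (div_pos (hψ_pos α hα s) hσ)
    have h2 : (α * s ^ 2 * PX + σ) / σ - 1 ≤ PX / σ * s ^ 2 := by
      rw [div_sub_one hσ.ne', div_mul_eq_mul_div, div_le_div_iff₀ hσ hσ]
      nlinarith [mul_nonneg (mul_nonneg (mul_nonneg
        (by linarith : (0:ℝ) ≤ 1 - α) hPX.le) (sq_nonneg s)) hσ.le]
    linarith
  have hψ_int : ∀ (α : ℝ), 0 ≤ α → α ≤ 1 →
      Integrable (fun s : ℝ => Real.log ((α * s ^ 2 * PX + σ) / σ)) μS := by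
    intro α hα hα1
    refine (hs2.const_mul (PX / σ)).mono' (hψ_meas α) ?_
    refine Filter.Eventually.of_forall fun s => ?_
    rw [Real.norm_eq_abs, abs_of_nonneg (hψ_nonneg α hα s)]
    exact hψ_le α hα hα1 s
  -- uniform upper bound on f
  have hfM : ∀ (α : ℝ), 0 ≤ α → α ≤ 1 →
      ffun σ PX μS α ≤ (1 / 2) * (PX / σ * σs) := by
    intro α hα hα1
    rw [ffun]
    have : (∫ s, Real.log ((α * s ^ 2 * PX + σ) / σ) ∂μS)
        ≤ ∫ s, PX / σ * s ^ 2 ∂μS :=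
      integral_mono (hψ_int α hα hα1) (hs2.const_mul _) (hψ_le α hα hα1)
    rw [integral_const_mul, hvar] at this
    linarith
  -- concavity of f
  have hf_conc : ∀ (α₁ α₂ a b : ℝ), 0 ≤ α₁ → α₁ ≤ 1 → 0 ≤ α₂ → α₂ ≤ 1 →
      0 ≤ a → 0 ≤ b → a + b = 1 →
      a * ffun σ PX μS α₁ + b * ffun σ PX μS α₂ ≤ ffun σ PX μS (a * α₁ + b * α₂) := by
    intro α₁ α₂ a b hα₁ hα₁1 hα₂ hα₂1 ha hb hab
    rw [ffun, ffun, ffun]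
    have key : a * (∫ s, Real.log ((α₁ * s ^ 2 * PX + σ) / σ) ∂μS)
        + b * (∫ s, Real.log ((α₂ * s ^ 2 * PX + σ) / σ) ∂μS)
        ≤ ∫ s, Real.log (((a * α₁ + b * α₂) * s ^ 2 * PX + σ) / σ) ∂μS := by
      rw [← integral_const_mul, ← integral_const_mul,
        ← integral_add ((hψ_int α₁ hα₁ hα₁1).const_mul a) ((hψ_int α₂ hα₂ hα₂1).const_mul b)]
      refine integral_mono
        (((hψ_int α₁ hα₁ hα₁1).const_mul a).add ((hψ_int α₂ hα₂ hα₂1).const_mul b))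
        (hψ_int _ (by nlinarith [mul_nonneg ha hα₁, mul_nonneg hb hα₂]) (by nlinarith)) fun s => ?_
      have hy₁ : (0:ℝ) < α₁ * s ^ 2 * PX + σ := hψ_pos α₁ hα₁ s
      have hy₂ : (0:ℝ) < α₂ * s ^ 2 * PX + σ := hψ_pos α₂ hα₂ s
      have hcc := strictConcaveOn_log_Ioi.concaveOn.2 (Set.mem_Ioi.2 hy₁)
        (Set.mem_Ioi.2 hy₂) ha hb hab
      simp only [smul_eq_mul] at hcc
      have hcomb : a * (α₁ * s ^ 2 * PX + σ) + b * (α₂ * s ^ 2 * PX + σ)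
          = (a * α₁ + b * α₂) * s ^ 2 * PX + σ := by nlinarith [hab]
      rw [hcomb] at hcc
      show a * Real.log ((α₁ * s ^ 2 * PX + σ) / σ)
          + b * Real.log ((α₂ * s ^ 2 * PX + σ) / σ)
          ≤ Real.log (((a * α₁ + b * α₂) * s ^ 2 * PX + σ) / σ)
      have hy : (0:ℝ) < (a * α₁ + b * α₂) * s ^ 2 * PX + σ :=
        hψ_pos _ (by nlinarith [mul_nonneg ha hα₁, mul_nonneg hb hα₂]) s
      rw [Real.log_div hy₁.ne' hσ.ne', Real.log_div hy₂.ne' hσ.ne',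
        Real.log_div hy.ne' hσ.ne']
      have hc' : a * Real.log σ + b * Real.log σ = Real.log σ := by
        rw [← add_mul, hab, one_mul]
      nlinarith [hcc, hc']
    nlinarith [key]
  -- the sets whose suprema define C
  set S : ℝ → Set ℝ := fun D => {r : ℝ | ∃ α ∈ Set.Icc (0 : ℝ) 1,
    gfun σs σz PX α ≤ D ∧ r = ffun σ PX μS α} with hSdef
  have hC : ∀ D, Cfading σ σz σs PX μS D = sSup (S D) := fun D => rfl
  have hBdd : ∀ D, BddAbove (S D) := by
    intro D
    refine ⟨(1 / 2) * (PX / σ * σs), fun r hr => ?_⟩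
    obtain ⟨α, hα, -, hr⟩ := hr
    exact hr ▸ hfM α hα.1 hα.2
  have hNe : ∀ D, feasible σs σz PX D → (S D).Nonempty := by
    intro D hD
    obtain ⟨α, hα, hg⟩ := hD
    exact ⟨ffun σ PX μS α, α, hα, hg, rfl⟩
  -- the key combination lemma
  have hkey : ∀ (D₁ D₂ a b : ℝ), 0 ≤ a → 0 ≤ b → a + b = 1 →
      ∀ r₁ ∈ S D₁, ∀ r₂ ∈ S D₂, a * r₁ + b * r₂ ≤ sSup (S (a * D₁ + b * D₂)) := by
    intro D₁ D₂ a b ha hb hab r₁ hr₁ r₂ hr₂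
    obtain ⟨α₁, hα₁, hg₁, hrr₁⟩ := hr₁
    obtain ⟨α₂, hα₂, hg₂, hrr₂⟩ := hr₂
    have hmem : ffun σ PX μS (a * α₁ + b * α₂) ∈ S (a * D₁ + b * D₂) := by
      refine ⟨a * α₁ + b * α₂, ⟨add_nonneg (mul_nonneg ha hα₁.1) (mul_nonneg hb hα₂.1),
        by nlinarith [mul_le_mul_of_nonneg_left hα₁.2 ha,
          mul_le_mul_of_nonneg_left hα₂.2 hb]⟩, ?_, rfl⟩
      calc gfun σs σz PX (a * α₁ + b * α₂)
          ≤ a * gfun σs σz PX α₁ + b * gfun σs σz PX α₂ :=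
            gfun_convex σs σz PX hσs hσz0 hPX α₁ α₂ a b hα₁.1 hα₂.1 ha hb hab
        _ ≤ a * D₁ + b * D₂ := by
            have := mul_le_mul_of_nonneg_left hg₁ ha
            have := mul_le_mul_of_nonneg_left hg₂ hb
            linarith
    calc a * r₁ + b * r₂ = a * ffun σ PX μS α₁ + b * ffun σ PX μS α₂ := by
          rw [hrr₁, hrr₂]
      _ ≤ ffun σ PX μS (a * α₁ + b * α₂) :=
          hf_conc α₁ α₂ a b hα₁.1 hα₁.2 hα₂.1 hα₂.2 ha hb hab
      _ ≤ sSup (S (a * D₁ + b * D₂)) := le_csSup (hBdd _) hmem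
  constructor
  · -- monotone
    intro D₁ hD₁ D₂ hD₂ h12
    rw [hC, hC]
    refine csSup_le_csSup (hBdd D₂) (hNe D₁ hD₁) fun r hr => ?_
    obtain ⟨α, hα, hg, hr⟩ := hr
    exact ⟨α, hα, hg.trans h12, hr⟩
  · -- concave
    refine ⟨?_, ?_⟩
    · -- convexity of the feasible set
      intro D₁ hD₁ D₂ hD₂ a b ha hb hab
      obtain ⟨α₁, hα₁, hg₁'⟩ := hD₁
      obtain ⟨α₂, hα₂, hg₂'⟩ := hD₂
      have hg₁ : gfun σs σz PX α₁ ≤ D₁ := hg₁'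
      have hg₂ : gfun σs σz PX α₂ ≤ D₂ := hg₂'
      refine ⟨a * α₁ + b * α₂, ⟨add_nonneg (mul_nonneg ha hα₁.1) (mul_nonneg hb hα₂.1),
        by nlinarith [mul_le_mul_of_nonneg_left hα₁.2 ha,
          mul_le_mul_of_nonneg_left hα₂.2 hb]⟩, ?_⟩
      calc gfun σs σz PX (a * α₁ + b * α₂)
          ≤ a * gfun σs σz PX α₁ + b * gfun σs σz PX α₂ :=
            gfun_convex σs σz PX hσs hσz0 hPX α₁ α₂ a b hα₁.1 hα₂.1 ha hb hab
        _ ≤ a • D₁ + b • D₂ := by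
            have := mul_le_mul_of_nonneg_left hg₁ ha
            have := mul_le_mul_of_nonneg_left hg₂ hb
            simp only [smul_eq_mul]
            linarith
    · intro D₁ hD₁ D₂ hD₂ a b ha hb hab
      simp only [smul_eq_mul, hC]
      rcases eq_or_lt_of_le ha with rfl | ha'
      · -- a = 0, b = 1
        have hb1 : b = 1 := by linarith
        subst hb1
        simp only [zero_mul, one_mul, zero_add]
        exact le_rfl
      rcases eq_or_lt_of_le hb with rfl | hb'
      · have ha1 : a = 1 := by linarith
        subst ha1
        simp only [zero_mul, one_mul, add_zero, mul_zero]
        exact le_rfl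
      -- a, b > 0
      have h2 : ∀ r₁ ∈ S D₁, a * r₁ + b * sSup (S D₂) ≤ sSup (S (a * D₁ + b * D₂)) := by
        intro r₁ hr₁
        have hsup2 : sSup (S D₂) ≤ (sSup (S (a * D₁ + b * D₂)) - a * r₁) / b := by
          refine csSup_le (hNe D₂ hD₂) fun r₂ hr₂ => ?_
          rw [le_div_iff₀ hb']
          have := hkey D₁ D₂ a b ha hb hab r₁ hr₁ r₂ hr₂
          linarith
        have := mul_le_mul_of_nonneg_left hsup2 hb
        rw [mul_div_cancel₀ _ hb'.ne'] at this
        linarith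
      have hsup1 : sSup (S D₁) ≤ (sSup (S (a * D₁ + b * D₂)) - b * sSup (S D₂)) / a := by
        refine csSup_le (hNe D₁ hD₁) fun r₁ hr₁ => ?_
        rw [le_div_iff₀ ha']
        have := h2 r₁ hr₁
        linarith
      have := mul_le_mul_of_nonneg_left hsup1 ha
      rw [mul_div_cancel₀ _ ha'.ne'] at this
      linarith

end ISAC
end
end

section
/- Let S^n, N_e^n, N_z^n be mutually independent random vectors with i.i.d. components S_i ~ N(0,σ_s), N_{e,i} ~ N(0,σ_e), N_{z,i} ~ N(0,σ_z), where σ_s, σ_e, σ_z > 0. Then for every measurable estimator f : ℝ^n × ℝ^n → ℝ^n, the per-symbol mean-square error of estimating N_e^n from the pair (N_z^n − N_e^n, S^n + N_e^n) satisfies D_n := (1/n) Σ_{i=1}^n E[(N_{e,i} − f_i(N_z^n − N_e^n, S^n + N_e^n))²] ≥ σ_z σ_s σ_e / (σ_s σ_z + σ_z σ_e + σ_s σ_e). -/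
/-!
Write `A = Z - E` and `B = S + E` for the two observations and `Δ = σ_s σ_z + σ_z σ_e + σ_s σ_e`.
The residual `V = E - (σ_z σ_e B - σ_s σ_e A) / Δ` of the best linear estimate is uncorrelated with
`A` and `B`; as `(S, E, Z)` is Gaussian, `V` is then independent of `(A, B)`. Hence for any
estimator, `E - f(A, B) = V + W` with `W` independent of `V`, and the mean-square error is at least
`Var V = σ_s σ_e σ_z / Δ`. In the vector problem, once all coordinates but the `i`-th are frozen,
the `i`-th coordinate of the estimate is an estimator for the scalar problem.
-/

open MeasureTheory ProbabilityTheory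

noncomputable section

namespace ISAC

/-- The joint law of `(S^n, N_e^n, N_z^n)`: mutually independent vectors with i.i.d.
centered Gaussian components of variances `σ_s`, `σ_e`, `σ_z`. -/
def gaussTriple (σs σe σz : NNReal) (n : ℕ) :
    Measure ((Fin n → ℝ) × (Fin n → ℝ) × (Fin n → ℝ)) :=
  (Measure.pi fun _ : Fin n => gaussianReal 0 σs).prod
    ((Measure.pi fun _ : Fin n => gaussianReal 0 σe).prod
      (Measure.pi fun _ : Fin n => gaussianReal 0 σz))

open scoped NNReal ENNReal

def sensingMMSE (vs ve vz : ℝ) : ℝ := vs * ve * vz / (vs * vz + vz * ve + vs * ve)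

def sensingResidual (vs ve vz s e z : ℝ) : ℝ :=
  (vs * vz * e + vs * ve * z - vz * ve * s) / (vs * vz + vz * ve + vs * ve)

lemma sensingResidual_eq (vs ve vz s e z : ℝ) :
    sensingResidual vs ve vz s e z =
      -(vz * ve / (vs * vz + vz * ve + vs * ve)) * s +
        vs * vz / (vs * vz + vz * ve + vs * ve) * e +
        vs * ve / (vs * vz + vz * ve + vs * ve) * z := by
  unfold sensingResidual; ring

lemma sensingResidual_add (vs ve vz s e z : ℝ) (hΔ : vs * vz + vz * ve + vs * ve ≠ 0) :
    sensingResidual vs ve vz s e z +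
      (vz * ve * (s + e) - vs * ve * (z - e)) / (vs * vz + vz * ve + vs * ve) = e := by
  rw [sensingResidual, ← add_div, div_eq_iff hΔ]
  ring

section Estimation

variable {Ω : Type*} [MeasurableSpace Ω] {P : Measure Ω}

lemma ofReal_variance_le_lintegral_sq_add_const [IsProbabilityMeasure P] {V : Ω → ℝ}
    (hV : MemLp V 2 P) (w : ℝ) :
    ENNReal.ofReal Var[V; P] ≤ ∫⁻ ω, ENNReal.ofReal ((V ω + w) ^ 2) ∂P := by
  have hVw : MemLp (fun ω ↦ V ω + w) 2 P := hV.add (memLp_const w)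
  rw [← ofReal_integral_eq_lintegral_ofReal hVw.integrable_sq
    (Filter.Eventually.of_forall fun _ ↦ sq_nonneg _)]
  refine ENNReal.ofReal_le_ofReal ?_
  calc Var[V; P] = Var[fun ω ↦ V ω + w; P] :=
        (variance_add_const hV.aestronglyMeasurable w).symm
    _ ≤ P[(fun ω ↦ V ω + w) ^ 2] := variance_le_expectation_sq hVw.aestronglyMeasurable
    _ = ∫ ω, (V ω + w) ^ 2 ∂P := rfl

lemma ofReal_variance_le_lintegral_sq_add [IsProbabilityMeasure P] {V W : Ω → ℝ}
    (hVW : IndepFun V W P) (hV : MemLp V 2 P) (hW : AEMeasurable W P) :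
    ENNReal.ofReal Var[V; P] ≤ ∫⁻ ω, ENNReal.ofReal ((V ω + W ω) ^ 2) ∂P := by
  have hm : Measurable fun p : ℝ × ℝ ↦ ENNReal.ofReal ((p.1 + p.2) ^ 2) := by fun_prop
  rw [← lintegral_map' hm.aemeasurable (hV.aemeasurable.prodMk hW),
    (indepFun_iff_map_prod_eq_prod_map_map hV.aemeasurable hW).1 hVW,
    lintegral_prod_symm _ hm.aemeasurable]
  calc ENNReal.ofReal Var[V; P] = ∫⁻ _, ENNReal.ofReal Var[V; P] ∂P.map W := by
        simp [Measure.map_apply_of_aemeasurable hW MeasurableSet.univ]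
    _ ≤ _ := lintegral_mono fun w ↦ by
        rw [lintegral_map' (by fun_prop) hV.aemeasurable]
        exact ofReal_variance_le_lintegral_sq_add_const hV w

lemma covariance_sum_mul_sum_of_pairwise [IsFiniteMeasure P] {ι : Type*} [Fintype ι]
    {X : ι → Ω → ℝ} (hX : ∀ i, MemLp (X i) 2 P)
    (hcov : Pairwise fun i j ↦ cov[X i, X j; P] = 0) (a b : ι → ℝ) :
    cov[fun ω ↦ ∑ i, a i * X i ω, fun ω ↦ ∑ i, b i * X i ω; P] =
      ∑ i, a i * b i * Var[X i; P] := by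
  classical
  rw [covariance_fun_sum_fun_sum (fun i ↦ (hX i).const_mul _) (fun i ↦ (hX i).const_mul _)]
  refine Finset.sum_congr rfl fun i _ ↦ ?_
  rw [Finset.sum_eq_single i (fun j _ hji ↦ by
      rw [covariance_const_mul_left, covariance_const_mul_right, hcov hji.symm]; ring)
    (by simp), covariance_const_mul_left, covariance_const_mul_right,
    covariance_self (hX i).aemeasurable]
  ring

lemma covariance_lincomb₃ [IsFiniteMeasure P] {S E Z : Ω → ℝ} (hS : MemLp S 2 P)
    (hE : MemLp E 2 P) (hZ : MemLp Z 2 P)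
    (hSE : cov[S, E; P] = 0) (hSZ : cov[S, Z; P] = 0) (hEZ : cov[E, Z; P] = 0)
    (a₁ a₂ a₃ b₁ b₂ b₃ : ℝ) :
    cov[fun ω ↦ a₁ * S ω + a₂ * E ω + a₃ * Z ω, fun ω ↦ b₁ * S ω + b₂ * E ω + b₃ * Z ω; P] =
      a₁ * b₁ * Var[S; P] + a₂ * b₂ * Var[E; P] + a₃ * b₃ * Var[Z; P] := by
  have hX : ∀ i, MemLp (![S, E, Z] i) 2 P := by
    intro i; fin_cases i <;> assumption
  have hpair : Pairwise fun i j ↦ cov[![S, E, Z] i, ![S, E, Z] j; P] = 0 := by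
    intro i j hij
    fin_cases i <;> fin_cases j <;> simp_all [covariance_comm]
  simpa [Fin.sum_univ_three, add_assoc] using
    covariance_sum_mul_sum_of_pairwise hX hpair ![a₁, a₂, a₃] ![b₁, b₂, b₃]

lemma HasGaussianLaw.indepFun_prodMk_of_covariance_eq_zero {X Y₁ Y₂ : Ω → ℝ}
    (h : HasGaussianLaw (fun ω ↦ (X ω, Y₁ ω, Y₂ ω)) P) (h₁ : cov[X, Y₁; P] = 0)
    (h₂ : cov[X, Y₂; P] = 0) :
    IndepFun X (fun ω ↦ (Y₁ ω, Y₂ ω)) P := by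
  have := h.isProbabilityMeasure
  refine h.indepFun_of_covariance_strongDual fun L₁ L₂ ↦ ?_
  have e₁ : ⇑L₁ ∘ X = fun ω ↦ L₁ 1 * X ω :=
    funext fun ω ↦ by simpa [mul_comm] using L₁.map_smul (X ω) 1
  have e₂ : ⇑L₂ ∘ (fun ω ↦ (Y₁ ω, Y₂ ω)) =
      (fun ω ↦ L₂ (1, 0) * Y₁ ω) + fun ω ↦ L₂ (0, 1) * Y₂ ω := by
    funext ω
    rw [Function.comp_apply, show (Y₁ ω, Y₂ ω) = Y₁ ω • ((1 : ℝ), (0 : ℝ)) + Y₂ ω • (0, 1) by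
      simp, map_add, map_smul, map_smul, smul_eq_mul, smul_eq_mul, mul_comm (Y₁ ω),
      mul_comm (Y₂ ω), Pi.add_apply]
  rw [e₁, e₂, covariance_const_mul_left, covariance_add_right h.fst.memLp_two
    (h.snd.fst.memLp_two.const_mul _) (h.snd.snd.memLp_two.const_mul _),
    covariance_const_mul_right, covariance_const_mul_right, h₁, h₂]
  ring

lemma indepFun_sensingResidual {S E Z : Ω → ℝ}
    (hG : HasGaussianLaw (fun ω ↦ (S ω, E ω, Z ω)) P)
    (hSE : cov[S, E; P] = 0) (hSZ : cov[S, Z; P] = 0) (hEZ : cov[E, Z; P] = 0) :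
    IndepFun (fun ω ↦ sensingResidual Var[S; P] Var[E; P] Var[Z; P] (S ω) (E ω) (Z ω))
      (fun ω ↦ (Z ω - E ω, S ω + E ω)) P := by
  have := hG.isProbabilityMeasure
  have hcov := covariance_lincomb₃ hG.fst.memLp_two hG.snd.fst.memLp_two hG.snd.snd.memLp_two
    hSE hSZ hEZ
  simp only [sensingResidual_eq]
  set vs := Var[S; P]
  set ve := Var[E; P]
  set vz := Var[Z; P]
  set Δ := vs * vz + vz * ve + vs * ve
  let Φ : ℝ × ℝ × ℝ →L[ℝ] ℝ × ℝ × ℝ := LinearMap.toContinuousLinearMap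
    { toFun := fun p ↦ (-(vz * ve / Δ) * p.1 + vs * vz / Δ * p.2.1 + vs * ve / Δ * p.2.2,
        p.2.2 - p.2.1, p.1 + p.2.1)
      map_add' := fun p q ↦ by ext <;> simp <;> ring
      map_smul' := fun c p ↦ by ext <;> simp <;> ring }
  refine HasGaussianLaw.indepFun_prodMk_of_covariance_eq_zero (hG.map_fun Φ) ?_ ?_
  · rw [show (fun ω ↦ Z ω - E ω) = fun ω ↦ 0 * S ω + -1 * E ω + 1 * Z ω by
      funext ω; ring, hcov]
    ring
  · rw [show (fun ω ↦ S ω + E ω) = fun ω ↦ 1 * S ω + 1 * E ω + 0 * Z ω by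
      funext ω; ring, hcov]
    ring

lemma variance_sensingResidual [IsFiniteMeasure P] {S E Z : Ω → ℝ} (hS : MemLp S 2 P)
    (hE : MemLp E 2 P) (hZ : MemLp Z 2 P)
    (hSE : cov[S, E; P] = 0) (hSZ : cov[S, Z; P] = 0) (hEZ : cov[E, Z; P] = 0) :
    Var[fun ω ↦ sensingResidual Var[S; P] Var[E; P] Var[Z; P] (S ω) (E ω) (Z ω); P] =
      sensingMMSE Var[S; P] Var[E; P] Var[Z; P] := by
  have hcov := covariance_lincomb₃ hS hE hZ hSE hSZ hEZ
  have := hS.aemeasurable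
  have := hE.aemeasurable
  have := hZ.aemeasurable
  simp only [sensingResidual_eq]
  rw [← covariance_self (by fun_prop), hcov, sensingMMSE]
  set Δ := Var[S; P] * Var[Z; P] + Var[Z; P] * Var[E; P] + Var[S; P] * Var[E; P]
  rcases eq_or_ne Δ 0 with hΔ | hΔ
  · simp [hΔ]
  field_simp
  ring

theorem ofReal_sensingMMSE_le_lintegral_sq_sub [IsProbabilityMeasure P] {S E Z : Ω → ℝ}
    (hG : HasGaussianLaw (fun ω ↦ (S ω, E ω, Z ω)) P)
    (hSE : cov[S, E; P] = 0) (hSZ : cov[S, Z; P] = 0) (hEZ : cov[E, Z; P] = 0)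
    {g : ℝ × ℝ → ℝ} (hg : Measurable g) :
    ENNReal.ofReal (sensingMMSE Var[S; P] Var[E; P] Var[Z; P]) ≤
      ∫⁻ ω, ENNReal.ofReal ((E ω - g (Z ω - E ω, S ω + E ω)) ^ 2) ∂P := by
  have hS : MemLp S 2 P := hG.fst.memLp_two
  have hE : MemLp E 2 P := hG.snd.fst.memLp_two
  have hZ : MemLp Z 2 P := hG.snd.snd.memLp_two
  have hVar := variance_sensingResidual hS hE hZ hSE hSZ hEZ
  have hVO := indepFun_sensingResidual hG hSE hSZ hEZ
  set vs := Var[S; P]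
  set ve := Var[E; P]
  set vz := Var[Z; P]
  rcases eq_or_ne (vs * vz + vz * ve + vs * ve) 0 with hΔ | hΔ
  · simp [sensingMMSE, hΔ]
  set V := fun ω ↦ sensingResidual vs ve vz (S ω) (E ω) (Z ω)
  have hV : MemLp V 2 P := by
    simp only [V, sensingResidual_eq]
    exact ((hS.const_mul _).add (hE.const_mul _)).add (hZ.const_mul _)
  -- the best linear estimate of `E`, minus the given one
  set h : ℝ × ℝ → ℝ :=
    fun o ↦ (vz * ve * o.2 - vs * ve * o.1) / (vs * vz + vz * ve + vs * ve) - g o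
  have hh : Measurable h := (by fun_prop : Measurable fun o : ℝ × ℝ ↦
    (vz * ve * o.2 - vs * ve * o.1) / (vs * vz + vz * ve + vs * ve)).sub hg
  calc ENNReal.ofReal (sensingMMSE vs ve vz) = ENNReal.ofReal Var[V; P] := by rw [hVar]
    _ ≤ ∫⁻ ω, ENNReal.ofReal ((V ω + h (Z ω - E ω, S ω + E ω)) ^ 2) ∂P :=
      ofReal_variance_le_lintegral_sq_add (hVO.comp measurable_id hh) hV
        (hh.comp_aemeasurable ((hZ.aemeasurable.sub hE.aemeasurable).prodMk
          (hS.aemeasurable.add hE.aemeasurable)))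
    _ = _ := lintegral_congr fun ω ↦ by
      congr 2
      simp only [V, h]
      linarith [sensingResidual_add vs ve vz (S ω) (E ω) (Z ω) hΔ]

end Estimation

theorem ofReal_sensingMMSE_le_lintegral_gaussianReal (vs ve vz : ℝ≥0) {g : ℝ × ℝ → ℝ}
    (hg : Measurable g) :
    ENNReal.ofReal (sensingMMSE vs ve vz) ≤
      ∫⁻ p, ENNReal.ofReal ((p.2.1 - g (p.2.2 - p.2.1, p.1 + p.2.1)) ^ 2)
        ∂(gaussianReal 0 vs).prod ((gaussianReal 0 ve).prod (gaussianReal 0 vz)) := by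
  set Q := (gaussianReal 0 vs).prod ((gaussianReal 0 ve).prod (gaussianReal 0 vz))
  have hsnd : Q.map Prod.snd = (gaussianReal 0 ve).prod (gaussianReal 0 vz) := by
    simp [Q, Measure.map_snd_prod]
  have hvs : Var[fun p ↦ p.1; Q] = vs := by
    rw [← variance_id_map (by fun_prop)]
    simp [Q]
  have hve : Var[fun p ↦ p.2.1; Q] = ve := by
    rw [← variance_id_map (by fun_prop), show (fun p : ℝ × ℝ × ℝ ↦ p.2.1) = Prod.fst ∘ Prod.snd
      from rfl, ← Measure.map_map (by fun_prop) (by fun_prop), hsnd]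
    simp
  have hvz : Var[fun p ↦ p.2.2; Q] = vz := by
    rw [← variance_id_map (by fun_prop), show (fun p : ℝ × ℝ × ℝ ↦ p.2.2) = Prod.snd ∘ Prod.snd
      from rfl, ← Measure.map_map (by fun_prop) (by fun_prop), hsnd]
    simp
  have hEZ : cov[fun p ↦ p.2.1, fun p ↦ p.2.2; Q] = 0 := by
    refine (covariance_map (X := Prod.fst) (Y := Prod.snd) (by fun_prop) (by fun_prop)
      (by fun_prop)).symm.trans ?_
    rw [hsnd]
    exact covariance_fst_snd_prod (X := id) (Y := id) (memLp_id_gaussianReal 2)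
      (memLp_id_gaussianReal 2)
  have h := ofReal_sensingMMSE_le_lintegral_sq_sub IsGaussian.hasGaussianLaw_id
    (covariance_fst_snd_prod (X := id) (Y := Prod.fst) (memLp_id_gaussianReal 2)
      ((memLp_id_gaussianReal 2).comp_fst _))
    (covariance_fst_snd_prod (X := id) (Y := Prod.snd) (memLp_id_gaussianReal 2)
      ((memLp_id_gaussianReal 2).comp_snd _)) hEZ hg
  rwa [hvs, hve, hvz] at h

lemma le_lintegral_pi_of_le_lintegral_update {ι : Type*} [Fintype ι] [DecidableEq ι]
    {X : ι → Type*} [∀ i, MeasurableSpace (X i)] {μ : ∀ i, Measure (X i)}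
    [∀ i, IsProbabilityMeasure (μ i)] {F : (∀ i, X i) → ℝ≥0∞} (hF : Measurable F) (i : ι)
    {c : ℝ≥0∞} (h : ∀ x, c ≤ ∫⁻ t, F (Function.update x i t) ∂μ i) :
    c ≤ ∫⁻ x, F x ∂Measure.pi μ :=
  calc c = ∫⁻ _, c ∂Measure.pi μ := by simp
    _ ≤ _ := lintegral_le_of_lmarginal_le {i} measurable_const hF fun x ↦ by
      simpa [lmarginal_singleton] using h x

lemma measurePreserving_unzip₃ {ι α β γ : Type*} [Fintype ι] [MeasurableSpace α]
    [MeasurableSpace β] [MeasurableSpace γ] (μ : Measure α) (ν : Measure β) (κ : Measure γ)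
    [SigmaFinite μ] [SigmaFinite ν] [SigmaFinite κ] :
    MeasurePreserving (fun x : ι → α × β × γ ↦
        (fun j ↦ (x j).1, fun j ↦ (x j).2.1, fun j ↦ (x j).2.2))
      (Measure.pi fun _ ↦ μ.prod (ν.prod κ))
      ((Measure.pi fun _ ↦ μ).prod ((Measure.pi fun _ ↦ ν).prod (Measure.pi fun _ ↦ κ))) :=
  ((MeasurePreserving.id _).prod (measurePreserving_arrowProdEquivProdArrow β γ ι
    (fun _ ↦ ν) (fun _ ↦ κ))).comp
    (measurePreserving_arrowProdEquivProdArrow α (β × γ) ι (fun _ ↦ μ) fun _ ↦ ν.prod κ)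

theorem ofReal_sensingMMSE_le_lintegral_gaussTriple (σs σe σz : ℝ≥0) {n : ℕ}
    {f : (Fin n → ℝ) × (Fin n → ℝ) → Fin n → ℝ} (hf : Measurable f) (i : Fin n) :
    ENNReal.ofReal (sensingMMSE σs σe σz) ≤
      ∫⁻ ω, ENNReal.ofReal
        ((ω.2.1 i - f (fun j => ω.2.2 j - ω.2.1 j, fun j => ω.1 j + ω.2.1 j) i) ^ 2)
        ∂(gaussTriple σs σe σz n) := by
  have hunzip := measurePreserving_unzip₃ (ι := Fin n) (gaussianReal 0 σs) (gaussianReal 0 σe)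
    (gaussianReal 0 σz)
  rw [gaussTriple, ← hunzip.lintegral_comp (by fun_prop)]
  refine le_lintegral_pi_of_le_lintegral_update (by fun_prop) i fun x ↦ ?_
  refine (ofReal_sensingMMSE_le_lintegral_gaussianReal σs σe σz
    (g := fun o ↦ f (Function.update (fun j ↦ (x j).2.2 - (x j).2.1) i o.1,
      Function.update (fun j ↦ (x j).1 + (x j).2.1) i o.2) i) (by fun_prop)).trans_eq
    (lintegral_congr fun t ↦ ?_)
  have hobs (φ : ℝ × ℝ × ℝ → ℝ) : (fun j ↦ φ (Function.update x i t j)) =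
      Function.update (fun j ↦ φ (x j)) i (φ t) := by
    funext j
    rcases eq_or_ne j i with rfl | hj <;> simp [Function.update_of_ne, *]
  simp only [Function.update_self]
  rw [hobs fun p ↦ p.2.2 - p.2.1, hobs fun p ↦ p.1 + p.2.1]

theorem gaussian_sensing_converse_general
    (σs σe σz : NNReal)
    (n : ℕ) (hn : 0 < n)
    (f : (Fin n → ℝ) × (Fin n → ℝ) → Fin n → ℝ) (hf : Measurable f) :
    ENNReal.ofReal
        ((σz * σs * σe : ℝ) / ((σs : ℝ) * σz + (σz : ℝ) * σe + (σs : ℝ) * σe)) ≤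
      (n : ENNReal)⁻¹ * ∑ i : Fin n,
        ∫⁻ ω, ENNReal.ofReal
          ((ω.2.1 i -
            f (fun j => ω.2.2 j - ω.2.1 j, fun j => ω.1 j + ω.2.1 j) i) ^ 2)
          ∂(gaussTriple σs σe σz n) := by
  have hc : (σz * σs * σe : ℝ) / ((σs : ℝ) * σz + (σz : ℝ) * σe + (σs : ℝ) * σe) =
      sensingMMSE σs σe σz := by
    rw [sensingMMSE]; ring
  calc ENNReal.ofReal _
      = (n : ℝ≥0∞)⁻¹ * ∑ _i : Fin n, ENNReal.ofReal (sensingMMSE σs σe σz) := by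
        rw [Finset.sum_const, Finset.card_univ, Fintype.card_fin, nsmul_eq_mul, ← mul_assoc,
          ENNReal.inv_mul_cancel (by exact_mod_cast hn.ne') (ENNReal.natCast_ne_top n),
          one_mul, hc]
    _ ≤ _ := by
      gcongr with i
      exact ofReal_sensingMMSE_le_lintegral_gaussTriple σs σe σz hf i

/-- **Converse bound for state sensing with noisy encoder CSI.** Let `S^n, N_e^n, N_z^n`
be mutually independent with i.i.d. components `S_i ~ N(0,σ_s)`, `N_{e,i} ~ N(0,σ_e)`,
`N_{z,i} ~ N(0,σ_z)`. For every measurable estimator `f` of `N_e^n` from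
`(N_z^n − N_e^n, S^n + N_e^n)`, the per-symbol mean-square error satisfies
`D_n ≥ σ_z σ_s σ_e / (σ_s σ_z + σ_z σ_e + σ_s σ_e)`. -/
theorem gaussian_sensing_converse
    (σs σe σz : NNReal) (hσs : 0 < σs) (hσe : 0 < σe) (hσz : 0 < σz)
    (n : ℕ) (hn : 0 < n)
    (f : (Fin n → ℝ) × (Fin n → ℝ) → Fin n → ℝ) (hf : Measurable f) :
    ENNReal.ofReal
        ((σz * σs * σe : ℝ) / ((σs : ℝ) * σz + (σz : ℝ) * σe + (σs : ℝ) * σe)) ≤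
      (n : ENNReal)⁻¹ * ∑ i : Fin n,
        ∫⁻ ω, ENNReal.ofReal
          ((ω.2.1 i -
            f (fun j => ω.2.2 j - ω.2.1 j, fun j => ω.1 j + ω.2.1 j) i) ^ 2)
          ∂(gaussTriple σs σe σz n) :=
  gaussian_sensing_converse_general σs σe σz n hn f hf

end ISAC
end
end
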